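/- (Lemma 2, equivalence of the finite-alphabet problems.) Let H ∈ ℂ^{U×B}, κ > 0, b ∈ {1,…,B}, h_b the b-th column of H, and let S ⊆ ℂ^U be any set of nonzero vectors such that h_b^H z ≠ 0 for all z ∈ S. Define G(z) = min over ζ ∈ ℂ of ( ‖e_b^H − ζ z^H H‖₂² + κ |ζ|² ‖z‖₂² ) and R(z) = ( ‖H^H z‖₂² + κ ‖z‖₂² ) / |h_b^H z|². Then for all z, z' ∈ S, G(z) ≤ G(z') if and only if R(z) ≤ R(z'); consequently, z ∈ S minimizes G over S if and only if z minimizes R over S. -/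

import Mathlib

open Matrix

/-- The per-row Wiener-filter objective evaluated at the structured row `ζ zᴴ`:
`‖e_bᴴ − ζ zᴴ H‖₂² + κ |ζ|² ‖z‖₂²`, where `zᴴ H` is `vecMul (star z) H`. -/
noncomputable def postObj (U B : ℕ) (H : Matrix (Fin U) (Fin B) ℂ) (κ : ℝ)
    (b : Fin B) (z : Fin U → ℂ) (ζ : ℂ) : ℝ :=
  (∑ j, ‖(Pi.single b 1 : Fin B → ℂ) j - ζ * Matrix.vecMul (star z) H j‖ ^ 2)
    + κ * ‖ζ‖ ^ 2 * ∑ i, ‖z i‖ ^ 2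

/-- `G(z)`: the minimum over `ζ ∈ ℂ` of the structured per-row objective. -/
noncomputable def Gpost (U B : ℕ) (H : Matrix (Fin U) (Fin B) ℂ) (κ : ℝ)
    (b : Fin B) (z : Fin U → ℂ) : ℝ :=
  sInf (Set.range (postObj U B H κ b z))

/-- The ratio objective `R(z) = (‖Hᴴ z‖₂² + κ ‖z‖₂²) / |h_bᴴ z|²` of eq. (16). -/
noncomputable def Rpost (U B : ℕ) (H : Matrix (Fin U) (Fin B) ℂ) (κ : ℝ)
    (b : Fin B) (z : Fin U → ℂ) : ℝ :=
  ((∑ j, ‖Hᴴ.mulVec z j‖ ^ 2) + κ * ∑ i, ‖z i‖ ^ 2) / ‖Hᴴ.mulVec z b‖ ^ 2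

/-! With `c = h_bᴴ z` and `A = ‖Hᴴ z‖₂² + κ ‖z‖₂²`, the objective is the scalar quadratic
`ζ ↦ 1 - 2 Re(ζ c̄) + |ζ|² A`. Completing the square gives `G(z) = 1 - |c|² / A = 1 - R(z)⁻¹`,
and since `A ≥ |c|² > 0`, `R` takes positive values, on which `t ↦ 1 - t⁻¹` is increasing. -/

theorem Complex.quadratic_eq_sq_norm_sub_add {A : ℝ} (hA : A ≠ 0) (c ζ : ℂ) :
    1 - 2 * (ζ * star c).re + ‖ζ‖ ^ 2 * A = A * ‖ζ - c / A‖ ^ 2 + (1 - ‖c‖ ^ 2 / A) := by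
  simp only [Complex.sq_norm, Complex.normSq_apply, Complex.sub_re, Complex.sub_im,
    Complex.div_ofReal_re, Complex.div_ofReal_im, Complex.mul_re, Complex.star_def,
    Complex.conj_re, Complex.conj_im]
  field_simp
  ring

theorem Complex.sInf_range_quadratic {A : ℝ} (hA : 0 < A) (c : ℂ) :
    sInf (Set.range fun ζ : ℂ => 1 - 2 * (ζ * star c).re + ‖ζ‖ ^ 2 * A) = 1 - ‖c‖ ^ 2 / A := by
  simp only [Complex.quadratic_eq_sq_norm_sub_add hA.ne']
  refine IsLeast.csInf_eq ⟨⟨c / A, by simp⟩, ?_⟩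
  rintro _ ⟨ζ, rfl⟩
  have := mul_nonneg hA.le (sq_nonneg ‖ζ - c / A‖)
  linarith

theorem Complex.sq_norm_one_sub_sub_sq_norm (w : ℂ) : ‖1 - w‖ ^ 2 - ‖w‖ ^ 2 = 1 - 2 * w.re := by
  simp only [Complex.sq_norm, Complex.normSq_apply, Complex.sub_re, Complex.sub_im,
    Complex.one_re, Complex.one_im]
  ring

theorem sum_sq_norm_single_one_sub {ι : Type*} [Fintype ι] [DecidableEq ι] (b : ι) (w : ι → ℂ) :
    ∑ j, ‖(Pi.single b 1 : ι → ℂ) j - w j‖ ^ 2 = 1 - 2 * (w b).re + ∑ j, ‖w j‖ ^ 2 := by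
  rw [← Complex.sq_norm_one_sub_sub_sq_norm, ← sub_eq_iff_eq_add, ← Finset.sum_sub_distrib,
    Finset.sum_eq_single b]
  · simp
  · intro j _ hj
    simp [Pi.single_eq_of_ne hj]
  · simp

section

variable {U B : ℕ} (H : Matrix (Fin U) (Fin B) ℂ) (κ : ℝ) (b : Fin B) (z : Fin U → ℂ)

noncomputable def RpostNum : ℝ := (∑ j, ‖Hᴴ.mulVec z j‖ ^ 2) + κ * ∑ i, ‖z i‖ ^ 2

theorem Rpost_eq_div : Rpost U B H κ b z = RpostNum H κ z / ‖Hᴴ.mulVec z b‖ ^ 2 := rfl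

theorem postObj_eq_quadratic (ζ : ℂ) :
    postObj U B H κ b z ζ
      = 1 - 2 * (ζ * star (Hᴴ.mulVec z b)).re + ‖ζ‖ ^ 2 * RpostNum H κ z := by
  have hvecMul : Matrix.vecMul (star z) H = star (Hᴴ.mulVec z) := by
    rw [Matrix.star_mulVec, Matrix.conjTranspose_conjTranspose]
  simp only [postObj, RpostNum, hvecMul, Pi.star_apply, sum_sq_norm_single_one_sub, norm_mul,
    norm_star, mul_pow, ← Finset.mul_sum]
  ring

theorem Gpost_eq_one_sub_inv_Rpost (hA : 0 < RpostNum H κ z) :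
    Gpost U B H κ b z = 1 - (Rpost U B H κ b z)⁻¹ := by
  rw [Gpost, funext (postObj_eq_quadratic H κ b z), Complex.sInf_range_quadratic hA,
    Rpost_eq_div, inv_div]

theorem sq_norm_mulVec_le_RpostNum (hκ : 0 ≤ κ) : ‖Hᴴ.mulVec z b‖ ^ 2 ≤ RpostNum H κ z :=
  le_add_of_le_of_nonneg
    (Finset.single_le_sum (fun j _ => sq_nonneg ‖Hᴴ.mulVec z j‖) (Finset.mem_univ b))
    (by positivity)

variable {κ b z}

theorem RpostNum_pos (hκ : 0 ≤ κ) (hc : Hᴴ.mulVec z b ≠ 0) : 0 < RpostNum H κ z :=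
  (pow_pos (norm_pos_iff.mpr hc) 2).trans_le (sq_norm_mulVec_le_RpostNum H κ b z hκ)

theorem Rpost_pos (hκ : 0 ≤ κ) (hc : Hᴴ.mulVec z b ≠ 0) : 0 < Rpost U B H κ b z :=
  div_pos (RpostNum_pos H hκ hc) (pow_pos (norm_pos_iff.mpr hc) 2)

theorem Gpost_le_Gpost_iff (hκ : 0 ≤ κ) {z' : Fin U → ℂ} (hc : Hᴴ.mulVec z b ≠ 0)
    (hc' : Hᴴ.mulVec z' b ≠ 0) :
    Gpost U B H κ b z ≤ Gpost U B H κ b z' ↔ Rpost U B H κ b z ≤ Rpost U B H κ b z' := by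
  rw [Gpost_eq_one_sub_inv_Rpost H κ b z (RpostNum_pos H hκ hc),
    Gpost_eq_one_sub_inv_Rpost H κ b z' (RpostNum_pos H hκ hc'), sub_le_sub_iff_left,
    inv_le_inv₀ (Rpost_pos H hκ hc') (Rpost_pos H hκ hc)]

end

theorem postFAWP_lemma2_equivalence_general (U B : ℕ) (H : Matrix (Fin U) (Fin B) ℂ)
    (κ : ℝ) (hκ : 0 < κ) (b : Fin B) (S : Set (Fin U → ℂ))
    (hSh : ∀ z ∈ S, Hᴴ.mulVec z b ≠ 0) :
    (∀ z ∈ S, ∀ z' ∈ S,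
      (Gpost U B H κ b z ≤ Gpost U B H κ b z' ↔ Rpost U B H κ b z ≤ Rpost U B H κ b z')) ∧
    (∀ z ∈ S,
      ((∀ z' ∈ S, Gpost U B H κ b z ≤ Gpost U B H κ b z')
        ↔ (∀ z' ∈ S, Rpost U B H κ b z ≤ Rpost U B H κ b z'))) := by
  have key : ∀ z ∈ S, ∀ z' ∈ S,
      (Gpost U B H κ b z ≤ Gpost U B H κ b z' ↔ Rpost U B H κ b z ≤ Rpost U B H κ b z') :=
    fun z hz z' hz' => Gpost_le_Gpost_iff H hκ.le (hSh z hz) (hSh z' hz')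
  exact ⟨key, fun z hz => forall₂_congr fun z' hz' => key z hz z' hz'⟩

/-- Lemma 2, equivalence of the finite-alphabet problems: on any set `S`
of nonzero vectors with `h_bᴴ z ≠ 0`, `G(z) ≤ G(z') ↔ R(z) ≤ R(z')`; consequently
`z` minimizes `G` over `S` iff it minimizes `R` over `S`. -/
theorem postFAWP_lemma2_equivalence (U B : ℕ) (H : Matrix (Fin U) (Fin B) ℂ)
    (κ : ℝ) (hκ : 0 < κ) (b : Fin B) (S : Set (Fin U → ℂ))
    (hS0 : ∀ z ∈ S, z ≠ 0) (hSh : ∀ z ∈ S, Hᴴ.mulVec z b ≠ 0) :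
    (∀ z ∈ S, ∀ z' ∈ S,
      (Gpost U B H κ b z ≤ Gpost U B H κ b z' ↔ Rpost U B H κ b z ≤ Rpost U B H κ b z')) ∧
    (∀ z ∈ S,
      ((∀ z' ∈ S, Gpost U B H κ b z ≤ Gpost U B H κ b z')
        ↔ (∀ z' ∈ S, Rpost U B H κ b z ≤ Rpost U B H κ b z'))) :=
  postFAWP_lemma2_equivalence_general U B H κ hκ b S hSh
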